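/- If α ≤ 1/2, the stochastic solution of x = G(x) is unique: any two nonnegative solutions x, y with 1ᵀx = 1ᵀy = 1 are equal. -/

import Mathlib

/-!
`G` is monotone and continuous on the nonnegative cone and `G 0 ≥ 0`, so the iterates
`G^[k] 0` increase to the minimal nonnegative solution `m = ⨆ k, G^[k] 0`, which lies below every
nonnegative solution `x`. Summing `m = G m` with `1ᵀR = 1ᵀ` shows that `s = 1ᵀm` solves
`s = α s² + 1 - α`, whose roots are `1` and `(1 - α)/α ≥ 1`; as `s ≤ 1ᵀx = 1`, we get `s = 1`.
Hence `m ≤ x` with equal sums forces `x = m` for every stochastic solution `x`.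
-/

noncomputable def Gmap (n : ℕ) (α : ℝ) (v : Fin n → ℝ)
    (R : Matrix (Fin n) (Fin n × Fin n) ℝ) (x : Fin n → ℝ) : Fin n → ℝ :=
  α • R.mulVec (fun p => x p.1 * x p.2) + (1 - α) • v

open Function Set

section MonotoneIteration

variable {β : Type*} [Preorder β] {f : β → β} {a y : β}

theorem MonotoneOn.monotone_iterate_of_le_map (hf : MonotoneOn f (Ici a)) (ha : a ≤ f a) :
    Monotone fun k => f^[k] a := by
  have step : ∀ k, a ≤ f^[k] a ∧ f^[k] a ≤ f (f^[k] a) := by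
    intro k
    induction k with
    | zero => exact ⟨le_rfl, ha⟩
    | succ k ih =>
      rw [iterate_succ_apply']
      exact ⟨ih.1.trans ih.2, hf ih.1 (ih.1.trans ih.2) ih.2⟩
  exact monotone_nat_of_le_succ fun k => (iterate_succ_apply' f k a).symm ▸ (step k).2

theorem MonotoneOn.iterate_le_of_isFixedPt (hf : MonotoneOn f (Ici a)) (ha : a ≤ f a)
    (hay : a ≤ y) (hy : IsFixedPt f y) (k : ℕ) : f^[k] a ≤ y := by
  induction k with
  | zero => exact hay
  | succ k ih =>
    rw [iterate_succ_apply', ← hy.eq]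
    exact hf ((hf.monotone_iterate_of_le_map ha) (Nat.zero_le k)) hay ih

end MonotoneIteration

theorem MonotoneOn.isFixedPt_iSup_iterate {β : Type*} [ConditionallyCompleteLattice β]
    [TopologicalSpace β] [SupConvergenceClass β] [T2Space β] {f : β → β} {a y : β}
    (hf : MonotoneOn f (Ici a)) (hcont : Continuous f) (ha : a ≤ f a) (hay : a ≤ y)
    (hy : IsFixedPt f y) :
    IsFixedPt f (⨆ k, f^[k] a) ∧ ⨆ k, f^[k] a ≤ y := by
  have hbdd : BddAbove (range fun k => f^[k] a) :=
    ⟨y, forall_mem_range.2 (hf.iterate_le_of_isFixedPt ha hay hy)⟩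
  exact ⟨isFixedPt_of_tendsto_iterate
      (tendsto_atTop_ciSup (hf.monotone_iterate_of_le_map ha) hbdd) hcont.continuousAt,
    ciSup_le (hf.iterate_le_of_isFixedPt ha hay hy)⟩

theorem eq_one_of_le_one_of_eq_quadratic {α s : ℝ} (hα : 0 ≤ α) (hα2 : α ≤ 1 / 2)
    (hs : s ≤ 1) (h : s = α * s ^ 2 + (1 - α)) : s = 1 := by
  have hfactor : (s - 1) * (α * s - (1 - α)) = 0 := by linear_combination -h
  rcases mul_eq_zero.1 hfactor with h1 | h2
  · linarith
  · have hα_half : α = 1 / 2 := by nlinarith [mul_nonneg hα (sub_nonneg.2 hs)]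
    subst hα_half
    linarith

section Gmap

variable {n : ℕ} {α : ℝ} {v : Fin n → ℝ} {R : Matrix (Fin n) (Fin n × Fin n) ℝ}

theorem Gmap_apply (x : Fin n → ℝ) (i : Fin n) :
    Gmap n α v R x i = α * ∑ p, R i p * (x p.1 * x p.2) + (1 - α) * v i := by
  simp [Gmap, Matrix.mulVec, dotProduct]

theorem continuous_Gmap : Continuous (Gmap n α v R) := by
  unfold Gmap
  fun_prop

theorem monotoneOn_Gmap (hα : 0 ≤ α) (hR : ∀ i j, 0 ≤ R i j) :
    MonotoneOn (Gmap n α v R) (Ici 0) := by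
  intro a ha b _ hab i
  rw [Gmap_apply, Gmap_apply]
  have hb : 0 ≤ b := le_trans ha hab
  gcongr with p
  · exact hR i p
  all_goals first | exact ha _ | exact hb _ | exact hab _

theorem zero_le_Gmap_zero (hα1 : α ≤ 1) (hv : 0 ≤ v) : 0 ≤ Gmap n α v R 0 := by
  intro i
  rw [Gmap_apply]
  simpa using mul_nonneg (sub_nonneg.2 hα1) (hv i)

theorem sum_Gmap (hRs : ∀ j, ∑ i, R i j = 1) (x : Fin n → ℝ) :
    ∑ i, Gmap n α v R x i = α * (∑ i, x i) ^ 2 + (1 - α) * ∑ i, v i := by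
  have hquad : ∑ i, ∑ p, R i p * (x p.1 * x p.2) = (∑ i, x i) ^ 2 := by
    rw [Finset.sum_comm]
    simp only [← Finset.sum_mul, hRs, one_mul]
    rw [Fintype.sum_prod_type, sq, Finset.sum_mul_sum]
  simp only [Gmap_apply, Finset.sum_add_distrib, ← Finset.mul_sum, hquad]

theorem eq_iSup_iterate_Gmap_of_isFixedPt (hα : 0 ≤ α) (hα2 : α ≤ 1 / 2) (hv : 0 ≤ v)
    (hv1 : ∑ i, v i = 1) (hR : ∀ i j, 0 ≤ R i j) (hRs : ∀ j, ∑ i, R i j = 1)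
    {x : Fin n → ℝ} (hx0 : 0 ≤ x) (hx : IsFixedPt (Gmap n α v R) x) (hx1 : ∑ i, x i = 1) :
    x = ⨆ k, (Gmap n α v R)^[k] 0 := by
  obtain ⟨hm, hmx⟩ := (monotoneOn_Gmap hα hR).isFixedPt_iSup_iterate continuous_Gmap
    (zero_le_Gmap_zero (by linarith) hv) hx0 hx
  set m := ⨆ k, (Gmap n α v R)^[k] 0
  have hm_sum : ∑ i, m i = 1 := by
    refine eq_one_of_le_one_of_eq_quadratic hα hα2 ?_ ?_
    · exact hx1 ▸ Finset.sum_le_sum fun i _ => hmx i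
    · conv_lhs => rw [← hm.eq, sum_Gmap hRs, hv1, mul_one]
  funext i
  exact ((Finset.sum_eq_sum_iff_of_le fun i _ => hmx i).1 (hm_sum.trans hx1.symm) i
    (Finset.mem_univ i)).symm

end Gmap

theorem stmt_10_general (n : ℕ) (α : ℝ) (hα : α ∈ Set.Ioo (0:ℝ) 1)
    (hα2 : α ≤ 1 / 2)
    (v : Fin n → ℝ) (hv : ∀ i, 0 ≤ v i) (hv1 : ∑ i, v i = 1)
    (R : Matrix (Fin n) (Fin n × Fin n) ℝ) (hR : ∀ i j, 0 ≤ R i j)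
    (hRs : ∀ j, ∑ i, R i j = 1)
    (x y : Fin n → ℝ)
    (hx0 : ∀ i, 0 ≤ x i) (hxfix : Gmap n α v R x = x) (hx1 : ∑ i, x i = 1)
    (hy0 : ∀ i, 0 ≤ y i) (hyfix : Gmap n α v R y = y) (hy1 : ∑ i, y i = 1) :
    x = y :=
  (eq_iSup_iterate_Gmap_of_isFixedPt hα.1.le hα2 hv hv1 hR hRs hx0 hxfix hx1).trans
    (eq_iSup_iterate_Gmap_of_isFixedPt hα.1.le hα2 hv hv1 hR hRs hy0 hyfix hy1).symm

theorem stmt_10 (n : ℕ) (hn : 1 ≤ n) (α : ℝ) (hα : α ∈ Set.Ioo (0:ℝ) 1)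
    (hα2 : α ≤ 1 / 2)
    (v : Fin n → ℝ) (hv : ∀ i, 0 ≤ v i) (hv1 : ∑ i, v i = 1)
    (R : Matrix (Fin n) (Fin n × Fin n) ℝ) (hR : ∀ i j, 0 ≤ R i j)
    (hRs : ∀ j, ∑ i, R i j = 1)
    (x y : Fin n → ℝ)
    (hx0 : ∀ i, 0 ≤ x i) (hxfix : Gmap n α v R x = x) (hx1 : ∑ i, x i = 1)
    (hy0 : ∀ i, 0 ≤ y i) (hyfix : Gmap n α v R y = y) (hy1 : ∑ i, y i = 1) :
    x = y :=
  stmt_10_general n α hα hα2 v hv hv1 R hR hRs x y hx0 hxfix hx1 hy0 hyfix hy1
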